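/- arXiv:1904.10435 — 5 statements merged into one kernel-verified Lean document; each statement's English description precedes it below -/
import Mathlib

section
/- (Error–residual equivalence) Let Ω = (a,b), β ≠ 0 constant, f ∈ L²(Ω), and let u ∈ L²(Ω) be the ultra-weak solution, i.e. -∫_Ω u (β v') = ∫_Ω f v for all v ∈ H₊(Ω). For arbitrary u_h ∈ L²(Ω) define the residual functional R(u_h) on H₊(Ω) by ⟨R(u_h), v⟩ = ∫_Ω f v + ∫_Ω u_h (β v'). Then ‖u - u_h‖_{L²(Ω)} = sup over v ∈ H₊(Ω), v ≠ 0, of ⟨R(u_h), v⟩ / ‖β v'‖_{L²(Ω)}. -/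
open MeasureTheory Set intervalIntegral
open scoped ENNReal

/-- The `L²` norm of `f` over the set `s ⊆ ℝ`. -/
noncomputable def L2N (f : ℝ → ℝ) (s : Set ℝ) : ℝ :=
  (eLpNorm f 2 (volume.restrict s)).toReal

/-- `v` belongs to `H¹(a,b)` with weak derivative `v'` : the derivative is
square-integrable (hence integrable) on `(a,b)` and `v` is the primitive of `v'`
(continuous representative). -/
def IsH1 (a b : ℝ) (v v' : ℝ → ℝ) : Prop :=
  MemLp v' 2 (volume.restrict (Ioo a b)) ∧
  IntervalIntegrable v' volume a b ∧
  ∀ x ∈ Icc a b, v x = v a + ∫ t in a..x, v' t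

/-!
Put `w = u_h - u`. The weak formulation turns the residual into `⟨R(u_h), v⟩ = ∫ w (β v')`,
so by Cauchy–Schwarz every quotient is at most `‖w‖`. The bound is attained by the test
function with `β v' = w`, namely the primitive of `w / β` vanishing at the outflow endpoint;
by the Lebesgue differentiation theorem it is nonzero unless `w = 0`, and in that case the
quotient of any nonzero test function, e.g. `x - p` with `p` the outflow endpoint, is `0 = ‖w‖`.
-/

section L2

variable {α : Type*} [MeasurableSpace α] {μ : Measure α} {φ ψ : α → ℝ}

theorem integral_mul_eq_inner_toLp (hφ : MemLp φ 2 μ) (hψ : MemLp ψ 2 μ) :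
    ∫ x, φ x * ψ x ∂μ = inner ℝ (hφ.toLp φ) (hψ.toLp ψ) := by
  rw [L2.inner_def]
  refine integral_congr_ae ?_
  filter_upwards [hφ.coeFn_toLp, hψ.coeFn_toLp] with x hφx hψx
  simp [hφx, hψx, mul_comm]

theorem integral_mul_div_eLpNorm_le (hφ : MemLp φ 2 μ) (hψ : MemLp ψ 2 μ) :
    (∫ x, φ x * ψ x ∂μ) / (eLpNorm ψ 2 μ).toReal ≤ (eLpNorm φ 2 μ).toReal := by
  rw [← Lp.norm_toLp _ hφ, ← Lp.norm_toLp _ hψ, integral_mul_eq_inner_toLp hφ hψ]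
  exact div_le_of_le_mul₀ (norm_nonneg _) (norm_nonneg _) (real_inner_le_norm _ _)

theorem integral_mul_self_div_eLpNorm (hφ : MemLp φ 2 μ) :
    (∫ x, φ x * φ x ∂μ) / (eLpNorm φ 2 μ).toReal = (eLpNorm φ 2 μ).toReal := by
  rw [← Lp.norm_toLp _ hφ, integral_mul_eq_inner_toLp hφ hφ, real_inner_self_eq_norm_mul_norm]
  rcases eq_or_ne ‖hφ.toLp φ‖ 0 with h | h
  · rw [h, div_zero]
  · exact mul_div_cancel_right₀ _ h

theorem exists_eLpNorm_eq_integral_mul_div [IsFiniteMeasure μ] (hμ : μ ≠ 0) {c : ℝ}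
    (hc : c ≠ 0) (hφ : MemLp φ 2 μ) :
    ∃ ψ : α → ℝ, MemLp ψ 2 μ ∧ ¬ ψ =ᵐ[μ] 0 ∧
      (eLpNorm φ 2 μ).toReal =
        (∫ x, φ x * (c * ψ x) ∂μ) / (eLpNorm (fun x => c * ψ x) 2 μ).toReal := by
  by_cases hφ0 : φ =ᵐ[μ] 0
  · refine ⟨fun _ => 1, memLp_const 1, by simp [Filter.EventuallyEq, hμ], ?_⟩
    have hint : ∫ x, φ x * (c * 1) ∂μ = 0 :=
      integral_eq_zero_of_ae (by filter_upwards [hφ0] with x hx; simp [hx])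
    rw [eLpNorm_congr_ae hφ0, hint]
    simp
  · refine ⟨fun x => c⁻¹ * φ x, hφ.const_mul _, fun h => hφ0 ?_, ?_⟩
    · filter_upwards [h] with x hx
      simpa [hc] using hx
    · simp only [mul_inv_cancel_left₀ hc]
      exact (integral_mul_self_div_eLpNorm hφ).symm

end L2

theorem MeasureTheory.MemLp.intervalIntegrable_of_Ioo {a b : ℝ} {g : ℝ → ℝ} {q : ℝ≥0∞}
    (hq : 1 ≤ q) (hab : a ≤ b) (hg : MemLp g q (volume.restrict (Ioo a b))) :
    IntervalIntegrable g volume a b :=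
  (intervalIntegrable_iff_integrableOn_Ioo_of_le hab).mpr (hg.integrable hq)

section Primitive

variable {a b p : ℝ} {g : ℝ → ℝ}

theorem ae_eq_zero_of_forall_intervalIntegral_eq_zero (hg : IntervalIntegrable g volume a b)
    (hp : p ∈ Icc a b) (h : ∀ x ∈ Icc a b, ∫ t in p..x, g t = 0) :
    g =ᵐ[volume.restrict (Ioo a b)] 0 := by
  filter_upwards [ae_restrict_mem measurableSet_Ioo,
    ae_restrict_of_ae hg.ae_hasDerivAt_integral] with x hx hderiv
  have hprim : HasDerivAt (fun y => ∫ t in p..y, g t) (g x) x :=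
    hderiv (Icc_subset_uIcc (Ioo_subset_Icc_self hx)) p (Icc_subset_uIcc hp)
  have hzero : (fun y => ∫ t in p..y, g t) =ᶠ[nhds x] fun _ => 0 :=
    Filter.eventually_of_mem (Ioo_mem_nhds hx.1 hx.2) fun y hy => h y (Ioo_subset_Icc_self hy)
  exact hprim.unique ((hasDerivAt_const x 0).congr_of_eventuallyEq hzero)

theorem isH1_intervalIntegral (hg : MemLp g 2 (volume.restrict (Ioo a b)))
    (hgi : IntervalIntegrable g volume a b) (hp : p ∈ Icc a b) :
    IsH1 a b (fun x => ∫ t in p..x, g t) g := by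
  refine ⟨hg, hgi, fun x hx => ?_⟩
  have hsub : ∀ {y}, y ∈ Icc a b → IntervalIntegrable g volume a y := fun hy =>
    hgi.mono_set (uIcc_subset_uIcc left_mem_uIcc (Icc_subset_uIcc hy))
  exact (integral_add_adjacent_intervals (hsub hp).symm (hsub hx)).symm

theorem not_eqOn_zero_intervalIntegral (hgi : IntervalIntegrable g volume a b)
    (hp : p ∈ Icc a b) (hg : ¬ g =ᵐ[volume.restrict (Ioo a b)] 0) :
    ¬ EqOn (fun x => ∫ t in p..x, g t) 0 (Icc a b) :=
  fun h => hg (ae_eq_zero_of_forall_intervalIntegral_eq_zero hgi hp h)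

end Primitive

theorem residual_eq_integral_sub_mul {a b β : ℝ} (hab : a ≤ b) {f u uh v v' : ℝ → ℝ}
    (hu : MemLp u 2 (volume.restrict (Ioo a b))) (huh : MemLp uh 2 (volume.restrict (Ioo a b)))
    (hv' : MemLp v' 2 (volume.restrict (Ioo a b)))
    (hweak : -(∫ x in a..b, u x * (β * v' x)) = ∫ x in a..b, f x * v x) :
    (∫ x in a..b, f x * v x) + ∫ x in a..b, uh x * (β * v' x) =
      ∫ x in Ioo a b, (uh - u) x * (β * v' x) := by
  have hβv' : MemLp (fun x => β * v' x) 2 (volume.restrict (Ioo a b)) := hv'.const_mul β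
  rw [← hweak, integral_of_le hab, integral_of_le hab, integral_Ioc_eq_integral_Ioo,
    integral_Ioc_eq_integral_Ioo, neg_add_eq_sub, ← MeasureTheory.integral_sub]
  · simp only [Pi.sub_apply, sub_mul]
  exacts [huh.integrable_mul hβv', hu.integrable_mul hβv']

theorem error_residual_equivalence_general (a b β : ℝ) (hab : a < b) (hβ : β ≠ 0)
    (f u uh : ℝ → ℝ)
    (hu : MemLp u 2 (volume.restrict (Ioo a b)))
    (huh : MemLp uh 2 (volume.restrict (Ioo a b)))
    (hweak : ∀ v v' : ℝ → ℝ, IsH1 a b v v' → v (if 0 < β then b else a) = 0 →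
      -(∫ x in a..b, u x * (β * v' x)) = ∫ x in a..b, f x * v x) :
    IsLUB {r : ℝ | ∃ v v' : ℝ → ℝ, IsH1 a b v v' ∧
        v (if 0 < β then b else a) = 0 ∧ ¬ Set.EqOn v 0 (Icc a b) ∧
        r = ((∫ x in a..b, f x * v x) + ∫ x in a..b, uh x * (β * v' x)) /
            L2N (fun x => β * v' x) (Ioo a b)}
      (L2N (fun x => u x - uh x) (Ioo a b)) := by
  set μ := volume.restrict (Ioo a b)
  set p := if 0 < β then b else a
  have hp : p ∈ Icc a b := by unfold p; split_ifs <;> simp [hab.le]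
  have hw : MemLp (uh - u) 2 μ := huh.sub hu
  have hresidual : ∀ v v', IsH1 a b v v' → v p = 0 →
      (∫ x in a..b, f x * v x) + ∫ x in a..b, uh x * (β * v' x) =
        ∫ x, (uh - u) x * (β * v' x) ∂μ :=
    fun v v' hv hvp => residual_eq_integral_sub_mul hab.le hu huh hv.1 (hweak v v' hv hvp)
  have herror : L2N (fun x => u x - uh x) (Ioo a b) = (eLpNorm (uh - u) 2 μ).toReal :=
    congrArg ENNReal.toReal (eLpNorm_sub_comm u uh 2 μ)
  rw [herror]
  refine IsGreatest.isLUB ⟨?_, ?_⟩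
  · obtain ⟨g, hg, hg0, hvalue⟩ :=
      exists_eLpNorm_eq_integral_mul_div (by simp [μ, hab]) hβ hw
    have hgi := hg.intervalIntegrable_of_Ioo one_le_two hab.le
    have hv := isH1_intervalIntegral hg hgi hp
    exact ⟨_, g, hv, integral_same, not_eqOn_zero_intervalIntegral hgi hp hg0,
      (hresidual _ _ hv integral_same).symm ▸ hvalue⟩
  · rintro r ⟨v, v', hv, hvp, -, rfl⟩
    rw [hresidual v v' hv hvp]
    exact integral_mul_div_eLpNorm_le hw (hv.1.const_mul β)

/-- error–residual equivalence. If `u` is the ultra-weak solution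
(`-∫ u (β v') = ∫ f v` for all `v ∈ H₊(Ω)`), then for any `u_h ∈ L²(Ω)` the
`L²` norm of the error `u - u_h` equals the supremum over nonzero `v ∈ H₊(Ω)`
of `⟨R(u_h), v⟩ / ‖β v'‖`, where `⟨R(u_h), v⟩ = ∫ f v + ∫ u_h (β v')`. -/
theorem error_residual_equivalence (a b β : ℝ) (hab : a < b) (hβ : β ≠ 0)
    (f u uh : ℝ → ℝ)
    (hf : MemLp f 2 (volume.restrict (Ioo a b)))
    (hu : MemLp u 2 (volume.restrict (Ioo a b)))
    (huh : MemLp uh 2 (volume.restrict (Ioo a b)))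
    (hweak : ∀ v v' : ℝ → ℝ, IsH1 a b v v' → v (if 0 < β then b else a) = 0 →
      -(∫ x in a..b, u x * (β * v' x)) = ∫ x in a..b, f x * v x) :
    IsLUB {r : ℝ | ∃ v v' : ℝ → ℝ, IsH1 a b v v' ∧
        v (if 0 < β then b else a) = 0 ∧ ¬ Set.EqOn v 0 (Icc a b) ∧
        r = ((∫ x in a..b, f x * v x) + ∫ x in a..b, uh x * (β * v' x)) /
            L2N (fun x => β * v' x) (Ioo a b)}
      (L2N (fun x => u x - uh x) (Ioo a b)) :=
  error_residual_equivalence_general a b β hab hβ f u uh hu huh hweak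
end

section
/- (Duality representation of the L² norm) Let Ω = (a,b), β ≠ 0 constant, and H₊(Ω) = { v ∈ H¹(Ω) : v = 0 at the outflow endpoint }. Then for every w ∈ L²(Ω), ‖w‖_{L²(Ω)} = sup over z ∈ H₊(Ω), z ≠ 0, of ( -∫_Ω w (β z') ) / ‖β z'‖_{L²(Ω)}. -/
/-!
Cauchy–Schwarz bounds every quotient by `‖w‖`. Conversely, take `z` the primitive of `-w / β`
vanishing at the outflow endpoint, so that `β z' = -w` and the quotient is `‖w‖² / ‖w‖ = ‖w‖`;
`z ≢ 0` unless `w = 0` a.e., by Lebesgue differentiation. If `w = 0` a.e., every admissible `z`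
gives the value `0 = ‖w‖`, and `x ↦ x - c` with `c` the outflow endpoint is admissible.
-/

open MeasureTheory Set intervalIntegral

open RealInnerProductSpace

section L2

variable {α : Type*} [MeasurableSpace α] {μ : Measure α} {f g : α → ℝ}

lemma integral_mul_eq_inner_toLp_s5 (hf : MemLp f 2 μ) (hg : MemLp g 2 μ) :
    ∫ x, f x * g x ∂μ = ⟪hf.toLp f, hg.toLp g⟫ := by
  rw [L2.inner_def]
  refine integral_congr_ae ?_
  filter_upwards [hf.coeFn_toLp, hg.coeFn_toLp] with x hfx hgx
  simp [hfx, hgx, mul_comm]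

lemma abs_integral_mul_le_eLpNorm_mul_eLpNorm (hf : MemLp f 2 μ) (hg : MemLp g 2 μ) :
    |∫ x, f x * g x ∂μ| ≤ (eLpNorm f 2 μ).toReal * (eLpNorm g 2 μ).toReal := by
  rw [integral_mul_eq_inner_toLp_s5 hf hg, ← Lp.norm_toLp f hf, ← Lp.norm_toLp g hg]
  exact abs_real_inner_le_norm _ _

lemma integral_mul_self_eq_eLpNorm_sq (hf : MemLp f 2 μ) :
    ∫ x, f x * f x ∂μ = (eLpNorm f 2 μ).toReal ^ 2 := by
  rw [integral_mul_eq_inner_toLp_s5 hf hf, real_inner_self_eq_norm_sq, Lp.norm_toLp]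

end L2

lemma intervalIntegral_eq_integral_restrict_Ioo {E : Type*} [NormedAddCommGroup E]
    [NormedSpace ℝ E] {a b : ℝ} (hab : a ≤ b) (f : ℝ → E) :
    ∫ x in a..b, f x = ∫ x, f x ∂volume.restrict (Ioo a b) := by
  rw [integral_of_le hab, integral_Ioc_eq_integral_Ioo]

lemma MeasureTheory.MemLp.intervalIntegrable {E : Type*} [NormedAddCommGroup E] {a b : ℝ} (hab : a ≤ b)
    {p : ENNReal} (hp : 1 ≤ p) {f : ℝ → E} (hf : MemLp f p (volume.restrict (Ioo a b))) :
    IntervalIntegrable f volume a b :=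
  (intervalIntegrable_iff_integrableOn_Ioo_of_le hab).mpr (hf.integrable hp)

lemma ae_eq_zero_of_forall_intervalIntegral_eq_zero_s5 {E : Type*} [NormedAddCommGroup E]
    [NormedSpace ℝ E] [CompleteSpace E] {a b c : ℝ} {f : ℝ → E}
    (hf : IntervalIntegrable f volume a b) (hc : c ∈ Icc a b)
    (h : ∀ x ∈ Icc a b, ∫ t in c..x, f t = 0) :
    f =ᵐ[volume.restrict (Ioo a b)] 0 := by
  have hab : a ≤ b := hc.1.trans hc.2
  rw [Filter.EventuallyEq, ae_restrict_iff' measurableSet_Ioo]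
  filter_upwards [hf.ae_hasDerivAt_integral] with x hderiv hx
  have hloc : (fun y => ∫ t in c..y, f t) =ᶠ[nhds x] fun _ => 0 :=
    Filter.eventually_of_mem (Ioo_mem_nhds hx.1 hx.2) fun y hy => h y (Ioo_subset_Icc_self hy)
  rw [uIcc_of_le hab] at hderiv
  exact (hderiv (Ioo_subset_Icc_self hx) c hc).unique
    ((hasDerivAt_const x (0 : E)).congr_of_eventuallyEq hloc)

section Primitive

variable {a b c : ℝ} {g : ℝ → ℝ}

lemma isH1_primitive (hc : c ∈ Icc a b) (hg : MemLp g 2 (volume.restrict (Ioo a b))) :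
    IsH1 a b (fun x => ∫ t in c..x, g t) g := by
  have hab : a ≤ b := hc.1.trans hc.2
  have hgi : IntervalIntegrable g volume a b := hg.intervalIntegrable hab one_le_two
  have hsub {x y : ℝ} (hx : x ∈ Icc a b) (hy : y ∈ Icc a b) : IntervalIntegrable g volume x y :=
    hgi.mono_set (uIcc_subset_uIcc (by rwa [uIcc_of_le hab]) (by rwa [uIcc_of_le hab]))
  refine ⟨hg, hgi, fun x hx => ?_⟩
  dsimp only
  exact (integral_add_adjacent_intervals (hsub hc (left_mem_Icc.mpr hab)) (hsub (left_mem_Icc.mpr hab) hx)).symm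

lemma primitive_not_eqOn_zero (hc : c ∈ Icc a b) (hg : MemLp g 2 (volume.restrict (Ioo a b)))
    (hg0 : ¬ g =ᵐ[volume.restrict (Ioo a b)] 0) :
    ¬ EqOn (fun x => ∫ t in c..x, g t) 0 (Icc a b) := fun h =>
  hg0 <| ae_eq_zero_of_forall_intervalIntegral_eq_zero_s5
    (hg.intervalIntegrable (hc.1.trans hc.2) one_le_two) hc h

end Primitive

section L2N

variable {a b : ℝ} {f g : ℝ → ℝ}

lemma L2N_neg (f : ℝ → ℝ) (s : Set ℝ) : L2N (fun x => -f x) s = L2N f s :=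
  congrArg ENNReal.toReal (eLpNorm_neg f 2 _)

lemma intervalIntegral_mul_self_eq_L2N_sq (hab : a ≤ b)
    (hf : MemLp f 2 (volume.restrict (Ioo a b))) :
    ∫ x in a..b, f x * f x = L2N f (Ioo a b) ^ 2 := by
  rw [intervalIntegral_eq_integral_restrict_Ioo hab, integral_mul_self_eq_eLpNorm_sq hf, L2N]

lemma neg_intervalIntegral_mul_div_L2N_le (hab : a ≤ b)
    (hf : MemLp f 2 (volume.restrict (Ioo a b))) (hg : MemLp g 2 (volume.restrict (Ioo a b))) :
    -(∫ x in a..b, f x * g x) / L2N g (Ioo a b) ≤ L2N f (Ioo a b) := by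
  refine div_le_of_le_mul₀ ENNReal.toReal_nonneg ENNReal.toReal_nonneg ?_
  rw [intervalIntegral_eq_integral_restrict_Ioo hab]
  exact (neg_le_abs _).trans (abs_integral_mul_le_eLpNorm_mul_eLpNorm hf hg)

end L2N

/-- duality representation of the `L²` norm: for `w ∈ L²(a,b)`,
`‖w‖_{L²} = sup { (-∫ w (β z')) / ‖β z'‖ : z ∈ H₊(Ω), z ≠ 0 }`. -/
theorem l2_norm_duality (a b β : ℝ) (hab : a < b) (hβ : β ≠ 0) (w : ℝ → ℝ)
    (hw : MemLp w 2 (volume.restrict (Ioo a b))) :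
    IsLUB {r : ℝ | ∃ z z' : ℝ → ℝ, IsH1 a b z z' ∧
        z (if 0 < β then b else a) = 0 ∧ ¬ Set.EqOn z 0 (Icc a b) ∧
        r = (-(∫ x in a..b, w x * (β * z' x))) / L2N (fun x => β * z' x) (Ioo a b)}
      (L2N w (Ioo a b)) := by
  set c := if 0 < β then b else a
  have hc : c ∈ Icc a b := by by_cases hβ0 : 0 < β <;> simp [c, hβ0, hab.le]
  refine IsGreatest.isLUB ⟨?_, ?_⟩
  · by_cases hw0 : w =ᵐ[volume.restrict (Ioo a b)] 0
    · have h1 : ¬ (fun _ => (1 : ℝ)) =ᵐ[volume.restrict (Ioo a b)] 0 := by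
        simp [Filter.EventuallyEq, -ae_restrict_eq, hab]
      have hint : ∫ x in a..b, w x * (β * 1) = 0 := by
        rw [intervalIntegral_eq_integral_restrict_Ioo hab.le]
        exact integral_eq_zero_of_ae (by filter_upwards [hw0] with x hx; simp [hx])
      refine ⟨_, _, isH1_primitive hc (memLp_const 1), integral_same,
        primitive_not_eqOn_zero hc (memLp_const 1) h1, ?_⟩
      rw [hint, neg_zero, zero_div]
      simp [L2N, eLpNorm_congr_ae hw0]
    · set z' := fun x => -β⁻¹ * w x
      have hz' : MemLp z' 2 (volume.restrict (Ioo a b)) := hw.const_mul _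
      have hβz' (x : ℝ) : β * z' x = -w x := by simp [z', hβ]
      refine ⟨_, z', isH1_primitive hc hz', integral_same,
        primitive_not_eqOn_zero hc hz' fun h => hw0 ?_, ?_⟩
      · filter_upwards [h] with x hx
        simpa [z', hβ] using hx
      · simp only [hβz', mul_neg, intervalIntegral.integral_neg, neg_neg, L2N_neg]
        rw [intervalIntegral_mul_self_eq_L2N_sq hab.le hw, pow_two, mul_self_div_self]
  · rintro _ ⟨z, z', hz, -, -, rfl⟩
    exact neg_intervalIntegral_mul_div_L2N_le hab.le hw (hz.1.const_mul β)
end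

section
/- (Stability of the local reconstruction) Let ω = (x₀, x₂) be a patch around vertex x₁ with hat function ψ, β ≠ 0 constant, u_h ∈ L²(ω), f ∈ L²(ω), and k' ≥ 0. Suppose s ∈ ℙ_{k'} on each of (x₀,x₁), (x₁,x₂) with s continuous on ω satisfies ∫_ω β (ψ s)' v_h = ∫_ω (f ψ + β ψ' u_h) v_h for all v_h piecewise polynomial of degree ≤ k' (with the compatibility ∫_ω f ψ + β ψ' u_h = 0 if x₁ is an interior vertex). Then ‖β (ψ s)'‖_{L²(ω)} ≤ ‖f ψ + β ψ' u_h‖_{L²(ω)}. -/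
open MeasureTheory Set intervalIntegral

/-- The hat function of the interior vertex `x₁` of the patch `(x₀,x₂)`. -/
noncomputable def hat1 (x₀ x₁ x₂ t : ℝ) : ℝ :=
  if t ≤ x₁ then (t - x₀) / (x₁ - x₀) else (x₂ - t) / (x₂ - x₁)

/-- The (piecewise constant) derivative of the hat function. -/
noncomputable def hat1D (x₀ x₁ x₂ t : ℝ) : ℝ :=
  if t ≤ x₁ then 1 / (x₁ - x₀) else -(1 / (x₂ - x₁))

/-- `β (ψ s)'` for the continuous piecewise polynomial `s = (s₁, s₂)`. -/
noncomputable def Gfun (x₀ x₁ x₂ β : ℝ) (s₁ s₂ : Polynomial ℝ) (t : ℝ) : ℝ :=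
  β * (hat1D x₀ x₁ x₂ t * (if t ≤ x₁ then s₁ else s₂).eval t
    + hat1 x₀ x₁ x₂ t * (if t ≤ x₁ then s₁ else s₂).derivative.eval t)

open Polynomial

/-! On each half of the patch `ψ s` is a polynomial of degree `≤ k' + 1`, so `G = β (ψ s)'` is a
piecewise polynomial of degree `≤ k'` and may itself be taken as test function. With
`F = f ψ + β ψ' u_h` this gives `‖G‖² = ⟪F, G⟫ ≤ ‖F‖ ‖G‖` in `L²(ω)`. -/

theorem norm_le_of_inner_self_eq_inner {E : Type*} [NormedAddCommGroup E] [InnerProductSpace ℝ E]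
    {f g : E} (h : inner ℝ g g = inner ℝ f g) : ‖g‖ ≤ ‖f‖ := by
  have hsq : ‖g‖ * ‖g‖ ≤ ‖f‖ * ‖g‖ := by
    rw [← real_inner_self_eq_norm_mul_norm, h]
    exact real_inner_le_norm f g
  nlinarith [norm_nonneg f, norm_nonneg g]

theorem toReal_eLpNorm_le_of_integral_mul_self_eq {α : Type*} [MeasurableSpace α] {μ : Measure α}
    {F G : α → ℝ} (hF : MemLp F 2 μ) (hG : MemLp G 2 μ)
    (h : ∫ x, G x * G x ∂μ = ∫ x, F x * G x ∂μ) :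
    (eLpNorm G 2 μ).toReal ≤ (eLpNorm F 2 μ).toReal := by
  rw [← Lp.norm_toLp G hG, ← Lp.norm_toLp F hF]
  refine norm_le_of_inner_self_eq_inner ?_
  simp only [L2.inner_def, RCLike.inner_apply, conj_trivial]
  calc ∫ x, hG.toLp G x * hG.toLp G x ∂μ = ∫ x, G x * G x ∂μ := by
        refine integral_congr_ae ?_
        filter_upwards [hG.coeFn_toLp] with x hx
        rw [hx]
    _ = ∫ x, F x * G x ∂μ := h
    _ = ∫ x, hG.toLp G x * hF.toLp F x ∂μ := by
        refine integral_congr_ae ?_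
        filter_upwards [hG.coeFn_toLp, hF.coeFn_toLp] with x hxG hxF
        rw [hxG, hxF, mul_comm]

theorem natDegree_derivative_mul_le {R : Type*} [CommSemiring R] {ℓ s : R[X]} {k : ℕ}
    (hℓ : ℓ.natDegree ≤ 1) (hs : s.natDegree ≤ k) : (derivative (ℓ * s)).natDegree ≤ k := by
  have := natDegree_derivative_le (ℓ * s)
  have := natDegree_mul_le (p := ℓ) (q := s)
  omega

theorem degree_C_mul_derivative_mul_le {R : Type*} [CommSemiring R] {ℓ s : R[X]} {k : ℕ}
    (hℓ : ℓ.natDegree ≤ 1) (hs : s.degree ≤ k) (b : R) : (C b * derivative (ℓ * s)).degree ≤ k :=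
  degree_le_of_natDegree_le <| (natDegree_C_mul_le _ _).trans <|
    natDegree_derivative_mul_le hℓ (natDegree_le_of_degree_le hs)

noncomputable def evalPiecewise (c : ℝ) (p q : ℝ[X]) (t : ℝ) : ℝ :=
  if t ≤ c then p.eval t else q.eval t

theorem measurable_evalPiecewise (c : ℝ) (p q : ℝ[X]) : Measurable (evalPiecewise c p q) :=
  Measurable.ite measurableSet_Iic p.continuous.measurable q.continuous.measurable

theorem memLp_top_evalPiecewise (c a b : ℝ) (p q : ℝ[X]) :
    MemLp (evalPiecewise c p q) ⊤ (volume.restrict (Ioo a b)) := by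
  obtain ⟨Cp, hCp⟩ := (isCompact_Icc (a := a) (b := b)).exists_bound_of_continuousOn
    p.continuous.continuousOn
  obtain ⟨Cq, hCq⟩ := (isCompact_Icc (a := a) (b := b)).exists_bound_of_continuousOn
    q.continuous.continuousOn
  refine memLp_top_of_bound (measurable_evalPiecewise c p q).aestronglyMeasurable (max Cp Cq) ?_
  filter_upwards [ae_restrict_mem measurableSet_Ioo] with t ht
  have ht' := Ioo_subset_Icc_self ht
  unfold evalPiecewise
  split_ifs
  exacts [(hCp t ht').trans (le_max_left _ _), (hCq t ht').trans (le_max_right _ _)]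

theorem memLp_two_evalPiecewise (c a b : ℝ) (p q : ℝ[X]) :
    MemLp (evalPiecewise c p q) 2 (volume.restrict (Ioo a b)) :=
  have : IsFiniteMeasure (volume.restrict (Ioo a b)) := ⟨by simp⟩
  (memLp_top_evalPiecewise c a b p q).mono_exponent le_top

theorem setIntegral_Ioo_mul_evalPiecewise {a b c : ℝ} (hac : a ≤ c) (hcb : c ≤ b) {H : ℝ → ℝ}
    {p q : ℝ[X]} (hH : IntegrableOn (fun t => H t * evalPiecewise c p q t) (Ioo a b)) :
    ∫ t in Ioo a b, H t * evalPiecewise c p q t =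
      (∫ t in a..c, H t * p.eval t) + ∫ t in c..b, H t * q.eval t := by
  have hab : IntervalIntegrable (fun t => H t * evalPiecewise c p q t) volume a b :=
    (intervalIntegrable_iff_integrableOn_Ioo_of_le (hac.trans hcb)).mpr hH
  rw [← integral_Ioc_eq_integral_Ioo, ← intervalIntegral.integral_of_le (hac.trans hcb),
    ← intervalIntegral.integral_add_adjacent_intervals
      (hab.mono_set (by
        rw [uIcc_of_le hac, uIcc_of_le (hac.trans hcb)]; exact Icc_subset_Icc_right hcb))
      (hab.mono_set (by
        rw [uIcc_of_le hcb, uIcc_of_le (hac.trans hcb)]; exact Icc_subset_Icc_left hac))]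
  congr 1
  · refine intervalIntegral.integral_congr fun t ht => ?_
    rw [uIcc_of_le hac] at ht
    simp [evalPiecewise, ht.2]
  · refine intervalIntegral.integral_congr_ae (Filter.Eventually.of_forall fun t ht => ?_)
    rw [uIoc_of_le hcb] at ht
    simp [evalPiecewise, not_le.mpr ht.1]

noncomputable def hatLeft (x₀ x₁ : ℝ) : ℝ[X] := C (x₁ - x₀)⁻¹ * (X - C x₀)

noncomputable def hatRight (x₁ x₂ : ℝ) : ℝ[X] := C (x₂ - x₁)⁻¹ * (C x₂ - X)

theorem natDegree_hatLeft_le (x₀ x₁ : ℝ) : (hatLeft x₀ x₁).natDegree ≤ 1 :=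
  (natDegree_C_mul_le _ _).trans (natDegree_X_sub_C_le _)

theorem natDegree_hatRight_le (x₁ x₂ : ℝ) : (hatRight x₁ x₂).natDegree ≤ 1 := by
  refine (natDegree_C_mul_le _ _).trans ((natDegree_sub_le _ _).trans ?_)
  simp

theorem hat1_eq_evalPiecewise (x₀ x₁ x₂ : ℝ) :
    hat1 x₀ x₁ x₂ = evalPiecewise x₁ (hatLeft x₀ x₁) (hatRight x₁ x₂) := by
  funext t
  simp only [hat1, evalPiecewise, hatLeft, hatRight, eval_mul, eval_C, eval_sub, eval_X,
    div_eq_inv_mul]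

theorem hat1D_eq_evalPiecewise (x₀ x₁ x₂ : ℝ) :
    hat1D x₀ x₁ x₂ =
      evalPiecewise x₁ (derivative (hatLeft x₀ x₁)) (derivative (hatRight x₁ x₂)) := by
  funext t
  simp [hat1D, evalPiecewise, hatLeft, hatRight]

theorem Gfun_eq_evalPiecewise (x₀ x₁ x₂ β : ℝ) (s₁ s₂ : ℝ[X]) :
    Gfun x₀ x₁ x₂ β s₁ s₂ = evalPiecewise x₁ (C β * derivative (hatLeft x₀ x₁ * s₁))
      (C β * derivative (hatRight x₁ x₂ * s₂)) := by
  funext t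
  rw [Gfun, hat1_eq_evalPiecewise, hat1D_eq_evalPiecewise]
  unfold evalPiecewise
  split_ifs <;> simp only [eval_mul, eval_C, derivative_mul, eval_add]

theorem local_reconstruction_stability_general (x₀ x₁ x₂ β : ℝ) (h01 : x₀ < x₁)
    (h12 : x₁ < x₂) (k' : ℕ) (f uh : ℝ → ℝ)
    (hf : MemLp f 2 (volume.restrict (Ioo x₀ x₂)))
    (huh : MemLp uh 2 (volume.restrict (Ioo x₀ x₂)))
    (s₁ s₂ : Polynomial ℝ)
    (hd1 : s₁.degree ≤ (k' : WithBot ℕ)) (hd2 : s₂.degree ≤ (k' : WithBot ℕ))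
    (hlocal : ∀ v₁ v₂ : Polynomial ℝ,
      v₁.degree ≤ (k' : WithBot ℕ) → v₂.degree ≤ (k' : WithBot ℕ) →
      (∫ t in x₀..x₁, Gfun x₀ x₁ x₂ β s₁ s₂ t * v₁.eval t)
        + (∫ t in x₁..x₂, Gfun x₀ x₁ x₂ β s₁ s₂ t * v₂.eval t)
      = (∫ t in x₀..x₁,
          (f t * hat1 x₀ x₁ x₂ t + β * hat1D x₀ x₁ x₂ t * uh t) * v₁.eval t)
        + ∫ t in x₁..x₂,
            (f t * hat1 x₀ x₁ x₂ t + β * hat1D x₀ x₁ x₂ t * uh t) * v₂.eval t) :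
    L2N (Gfun x₀ x₁ x₂ β s₁ s₂) (Ioo x₀ x₂) ≤
      L2N (fun t => f t * hat1 x₀ x₁ x₂ t + β * hat1D x₀ x₁ x₂ t * uh t)
        (Ioo x₀ x₂) := by
  set F := fun t => f t * hat1 x₀ x₁ x₂ t + β * hat1D x₀ x₁ x₂ t * uh t
  set p₁ := C β * derivative (hatLeft x₀ x₁ * s₁)
  set p₂ := C β * derivative (hatRight x₁ x₂ * s₂)
  have hG : Gfun x₀ x₁ x₂ β s₁ s₂ = evalPiecewise x₁ p₁ p₂ := Gfun_eq_evalPiecewise ..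
  have hG2 := memLp_two_evalPiecewise x₁ x₀ x₂ p₁ p₂
  have hF2 : MemLp F 2 (volume.restrict (Ioo x₀ x₂)) := by
    have hψ := memLp_top_evalPiecewise x₁ x₀ x₂ (hatLeft x₀ x₁) (hatRight x₁ x₂)
    have hψ' := memLp_top_evalPiecewise x₁ x₀ x₂
      (derivative (hatLeft x₀ x₁)) (derivative (hatRight x₁ x₂))
    simp only [F, hat1_eq_evalPiecewise, hat1D_eq_evalPiecewise]
    exact (hψ.mul' hf).add (huh.mul' (hψ'.const_mul β))
  have htest := hlocal p₁ p₂
    (degree_C_mul_derivative_mul_le (natDegree_hatLeft_le x₀ x₁) hd1 β)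
    (degree_C_mul_derivative_mul_le (natDegree_hatRight_le x₁ x₂) hd2 β)
  rw [hG, ← setIntegral_Ioo_mul_evalPiecewise h01.le h12.le (hG2.integrable_mul hG2),
    ← setIntegral_Ioo_mul_evalPiecewise h01.le h12.le (hF2.integrable_mul hG2)] at htest
  rw [L2N, L2N, hG]
  exact toReal_eLpNorm_le_of_integral_mul_self_eq hF2 hG2 htest

/-- stability of the local reconstruction: if the continuous
piecewise polynomial `s` of degree `≤ k'` solves the local problem on the
patch `(x₀,x₂)` then `‖β (ψ s)'‖_{L²(ω)} ≤ ‖f ψ + β ψ' u_h‖_{L²(ω)}`. -/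
theorem local_reconstruction_stability (x₀ x₁ x₂ β : ℝ) (h01 : x₀ < x₁)
    (h12 : x₁ < x₂) (hβ : β ≠ 0) (k' : ℕ) (f uh : ℝ → ℝ)
    (hf : MemLp f 2 (volume.restrict (Ioo x₀ x₂)))
    (huh : MemLp uh 2 (volume.restrict (Ioo x₀ x₂)))
    (s₁ s₂ : Polynomial ℝ)
    (hd1 : s₁.degree ≤ (k' : WithBot ℕ)) (hd2 : s₂.degree ≤ (k' : WithBot ℕ))
    (hcont : s₁.eval x₁ = s₂.eval x₁)
    (hcompat : (∫ t in x₀..x₂,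
      (f t * hat1 x₀ x₁ x₂ t + β * hat1D x₀ x₁ x₂ t * uh t)) = 0)
    (hlocal : ∀ v₁ v₂ : Polynomial ℝ,
      v₁.degree ≤ (k' : WithBot ℕ) → v₂.degree ≤ (k' : WithBot ℕ) →
      (∫ t in x₀..x₁, Gfun x₀ x₁ x₂ β s₁ s₂ t * v₁.eval t)
        + (∫ t in x₁..x₂, Gfun x₀ x₁ x₂ β s₁ s₂ t * v₂.eval t)
      = (∫ t in x₀..x₁,
          (f t * hat1 x₀ x₁ x₂ t + β * hat1D x₀ x₁ x₂ t * uh t) * v₁.eval t)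
        + ∫ t in x₁..x₂,
            (f t * hat1 x₀ x₁ x₂ t + β * hat1D x₀ x₁ x₂ t * uh t) * v₂.eval t) :
    L2N (Gfun x₀ x₁ x₂ β s₁ s₂) (Ioo x₀ x₂) ≤
      L2N (fun t => f t * hat1 x₀ x₁ x₂ t + β * hat1D x₀ x₁ x₂ t * uh t)
        (Ioo x₀ x₂) :=
  local_reconstruction_stability_general x₀ x₁ x₂ β h01 h12 k' f uh hf huh s₁ s₂ hd1 hd2 hlocal
end

section
/- (Global reconstruction satisfies the inflow boundary condition) With β > 0 on Ω = (a,b) and mesh vertices a = x₀ < … < x_n = b, let s_j ∈ H¹(ω_j) be the patchwise reconstructions of Definition of local problems, i.e., for each vertex x_j, ∫_{ω_j} β(ψ_j s_j)' v_h = ∫_{ω_j}(f ψ_j + β ψ_j' u_h) v_h for all piecewise polynomials v_h of degree ≤ k' on ω_j, where ⟨R(u_h), ψ_j⟩ = ∫ f ψ_j + ∫ u_h β ψ_j' = 0 holds for all interior vertices and the inflow vertex x₀. Then the global function s_h = ∑_j ψ_j s_j lies in H¹(Ω) and satisfies s_h(a) = 0. -/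
open MeasureTheory Set intervalIntegral

/-- Left endpoint of the patch `ω_j` around vertex `x j`. -/
def pl (x : ℕ → ℝ) (j : ℕ) : ℝ := if j = 0 then x 0 else x (j - 1)

/-- Right endpoint of the patch `ω_j` around vertex `x j` (mesh with `n` elements). -/
def pr (x : ℕ → ℝ) (n j : ℕ) : ℝ := if j = n then x n else x (j + 1)

/-- The piecewise affine hat function `ψ_j` of vertex `x j`, extended by zero. -/
noncomputable def hatf (x : ℕ → ℝ) (n j : ℕ) (y : ℝ) : ℝ :=
  if y < pl x j then 0
  else if y ≤ x j then (if j = 0 then 1 else (y - x (j - 1)) / (x j - x (j - 1)))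
  else if y ≤ pr x n j then (if j = n then 1 else (x (j + 1) - y) / (x (j + 1) - x j))
  else 0

/-- The (piecewise constant) derivative of the hat function `ψ_j`. -/
noncomputable def hatD (x : ℕ → ℝ) (n j : ℕ) (y : ℝ) : ℝ :=
  if y < pl x j then 0
  else if y ≤ x j then (if j = 0 then 0 else 1 / (x j - x (j - 1)))
  else if y ≤ pr x n j then (if j = n then 0 else -(1 / (x (j + 1) - x j)))
  else 0

/-- The index of the inflow vertex (`0` for `β > 0`, `n` for `β < 0`). -/
noncomputable def inflowIdx (n : ℕ) (β : ℝ) : ℕ := if 0 < β then 0 else n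

/-- Membership in the local space `V_j` on the patch `ω_j = (pl j, pr j)`:
`v ∈ H¹(ω_j)`, extended by zero outside `ω_j`; `v ∈ H¹₀(ω_j)` if `x j` is not
the inflow vertex, and `v` vanishes at the outflow endpoint of `ω_j` if `x j`
is the inflow vertex. -/
def Vmem (x : ℕ → ℝ) (n : ℕ) (β : ℝ) (j : ℕ) (v v' : ℝ → ℝ) : Prop :=
  IsH1 (pl x j) (pr x n j) v v' ∧
  (∀ y, y ∉ Ioo (pl x j) (pr x n j) → v y = 0) ∧
  (j = inflowIdx n β → v (if 0 < β then pr x n j else pl x j) = 0) ∧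
  (j ≠ inflowIdx n β → v (pl x j) = 0 ∧ v (pr x n j) = 0)

/-- The set of residual quotients over the local space `V_j` (zero extensions). -/
def localQuot (x : ℕ → ℝ) (n : ℕ) (β : ℝ) (R : (ℝ → ℝ) → ℝ) (j : ℕ) : Set ℝ :=
  {t : ℝ | ∃ v v' : ℝ → ℝ, Vmem x n β j v v' ∧
    ¬ Set.EqOn v 0 (Icc (pl x j) (pr x n j)) ∧
    t = R v / L2N (fun y => β * v' y) (Ioo (pl x j) (pr x n j))}

/-- The set of residual quotients over the global space `H₊(Ω)`. -/
def globalQuot (x : ℕ → ℝ) (n : ℕ) (β : ℝ) (R : (ℝ → ℝ) → ℝ) : Set ℝ :=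
  {t : ℝ | ∃ v v' : ℝ → ℝ, IsH1 (x 0) (x n) v v' ∧
    v (if 0 < β then x n else x 0) = 0 ∧ ¬ Set.EqOn v 0 (Icc (x 0) (x n)) ∧
    t = R v / L2N (fun y => β * v' y) (Ioo (x 0) (x n))}

/-- The patchwise reconstruction `s_j`, given by the polynomial pieces
`P j 0` (left piece) and `P j 1` (right piece). -/
noncomputable def sfun (x : ℕ → ℝ) (n : ℕ) (P : ℕ → ℕ → Polynomial ℝ) (j : ℕ) (y : ℝ) : ℝ :=
  if j = 0 then (P 0 1).eval y
  else if j = n then (P n 0).eval y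
  else if y ≤ x j then (P j 0).eval y else (P j 1).eval y

/-- The derivative `(ψ_j s_j)'` on the patch `ω_j`, computed piecewise by the
product rule (`ψ_j` being piecewise affine). -/
noncomputable def Dfun (x : ℕ → ℝ) (n : ℕ) (P : ℕ → ℕ → Polynomial ℝ) (j : ℕ) (y : ℝ) : ℝ :=
  if y ≤ x j then
    (1 / (x j - pl x j)) * (P j 0).eval y
      + ((y - pl x j) / (x j - pl x j)) * (P j 0).derivative.eval y
  else
    -(1 / (pr x n j - x j)) * (P j 1).eval y
      + ((pr x n j - y) / (pr x n j - x j)) * (P j 1).derivative.eval y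

/-!
On an element `[x i, x (i + 1)]` only `ψ_i s_i` and `ψ_{i+1} s_{i+1}` are nonzero, so `s_h` is a
polynomial there; continuity of each `s_j` at its vertex makes neighbouring pieces agree, so `s_h`
is continuous and piecewise `C¹`, hence in `H¹`. At the inflow vertex, testing the local problem
with `v_h = 1` and using `⟨R(u_h), ψ₀⟩ = 0` gives `β s₀(x₀) = -∫ β (ψ₀ s₀)' = 0`.
-/

section PiecewiseSmooth

variable {n : ℕ} {x : ℕ → ℝ} {F : ℕ → ℝ → ℝ}

/-- The weak derivative of a function that agrees with `F i` on each element
`[x i, x (i + 1)]` of a mesh. -/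
noncomputable def piecewiseDeriv (x : ℕ → ℝ) (n : ℕ) (F : ℕ → ℝ → ℝ) (y : ℝ) : ℝ :=
  ∑ i ∈ Finset.range n, (Ioc (x i) (x (i + 1))).indicator (deriv (F i)) y

lemma piecewiseDeriv_eq_deriv (hx : StrictMonoOn x (Iic n)) {i : ℕ} (hi : i < n) {t : ℝ}
    (ht : t ∈ Ioc (x i) (x (i + 1))) : piecewiseDeriv x n F t = deriv (F i) t := by
  have hmono := hx.monotoneOn
  rw [piecewiseDeriv, Finset.sum_eq_single_of_mem i (Finset.mem_range.2 hi),
    indicator_of_mem ht]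
  intro k hk hki
  apply indicator_of_notMem
  rintro ⟨hk₁, hk₂⟩
  have hkn : k < n := Finset.mem_range.1 hk
  rcases Nat.lt_or_gt_of_ne hki with hlt | hgt
  · have : x (k + 1) ≤ x i := hmono (mem_Iic.2 (by omega)) (mem_Iic.2 hi.le) hlt
    linarith [ht.1]
  · have : x (i + 1) ≤ x k := hmono (mem_Iic.2 (by omega)) (mem_Iic.2 hkn.le) hgt
    linarith [ht.2]

lemma integrable_piecewiseDeriv (hF : ∀ i, Continuous (deriv (F i))) :
    Integrable (piecewiseDeriv x n F) :=
  integrable_finsetSum _ fun i _ =>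
    (hF i).integrableOn_Ioc.integrable_indicator measurableSet_Ioc

lemma memLp_piecewiseDeriv (hF : ∀ i, Continuous (deriv (F i))) (p : ENNReal) (a b : ℝ) :
    MemLp (piecewiseDeriv x n F) p (volume.restrict (Ioo a b)) := by
  have : IsFiniteMeasure (volume.restrict (Ioo a b)) := isFiniteMeasure_restrict.2 measure_Ioo_lt_top.ne
  refine memLp_finsetSum _ fun i _ => MemLp.indicator measurableSet_Ioc ?_
  obtain ⟨C, hC⟩ := isCompact_Icc.exists_bound_of_continuousOn (hF i).continuousOn
  refine MemLp.of_bound (hF i).aestronglyMeasurable C ?_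
  filter_upwards [ae_restrict_mem measurableSet_Ioo] with y hy
  exact hC y (Ioo_subset_Icc_self hy)

lemma integral_piecewiseDeriv_of_mem_Icc (hx : StrictMonoOn x (Iic n))
    (hF : ∀ i, ContDiff ℝ 1 (F i)) {i : ℕ} (hi : i < n) {y : ℝ}
    (hy : y ∈ Icc (x i) (x (i + 1))) :
    ∫ t in x i..y, piecewiseDeriv x n F t = F i y - F i (x i) := by
  calc ∫ t in x i..y, piecewiseDeriv x n F t = ∫ t in x i..y, deriv (F i) t := by
        refine integral_congr_ae (ae_of_all _ fun t ht => ?_)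
        rw [uIoc_of_le hy.1] at ht
        exact piecewiseDeriv_eq_deriv hx hi ⟨ht.1, ht.2.trans hy.2⟩
    _ = F i y - F i (x i) :=
        integral_deriv_eq_sub (fun t _ => ((hF i).differentiable one_ne_zero).differentiableAt)
          (((hF i).continuous_deriv le_rfl).intervalIntegrable _ _)

lemma isH1_of_eqOn_Icc (hx : StrictMonoOn x (Iic n)) (hF : ∀ i, ContDiff ℝ 1 (F i))
    {S : ℝ → ℝ} (hS : ∀ i < n, EqOn S (F i) (Icc (x i) (x (i + 1)))) :
    IsH1 (x 0) (x n) S (piecewiseDeriv x n F) := by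
  have hderiv i : Continuous (deriv (F i)) := (hF i).continuous_deriv le_rfl
  have hint : Integrable (piecewiseDeriv x n F) := integrable_piecewiseDeriv hderiv
  refine ⟨memLp_piecewiseDeriv hderiv 2 _ _, hint.intervalIntegrable, ?_⟩
  suffices ∀ k ≤ n, ∀ y ∈ Icc (x 0) (x k), S y = S (x 0) + ∫ t in x 0..y, piecewiseDeriv x n F t
    from this n le_rfl
  intro k hk
  induction k with
  | zero =>
    intro y hy
    simp [le_antisymm hy.2 hy.1]
  | succ k ih =>
    intro y hy
    rcases le_or_gt y (x k) with hyk | hyk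
    · exact ih (by omega) y ⟨hy.1, hyk⟩
    have hk0 : x 0 ≤ x k := hx.monotoneOn (mem_Iic.2 (Nat.zero_le n)) (mem_Iic.2 (by omega))
      (Nat.zero_le k)
    have hyI : y ∈ Icc (x k) (x (k + 1)) := ⟨hyk.le, hy.2⟩
    have hkI : x k ∈ Icc (x k) (x (k + 1)) := ⟨le_rfl, hyI.1.trans hyI.2⟩
    have hSk := ih (by omega) (x k) ⟨hk0, le_rfl⟩
    rw [← integral_add_adjacent_intervals hint.intervalIntegrable hint.intervalIntegrable,
      integral_piecewiseDeriv_of_mem_Icc hx hF (by omega) hyI]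
    linarith [hS k (by omega) hyI, hS k (by omega) hkI]

end PiecewiseSmooth

section HatFunctions

variable {n : ℕ} {x : ℕ → ℝ}

lemma pl_le (hx : StrictMonoOn x (Iic n)) {j : ℕ} (hj : j ≤ n) : pl x j ≤ x j := by
  unfold pl
  split_ifs with hj0
  · rw [hj0]
  · exact hx.monotoneOn (mem_Iic.2 (by omega)) (mem_Iic.2 hj) (Nat.sub_le j 1)

lemma hatf_of_mem_Icc_right (hx : StrictMonoOn x (Iic n)) {j : ℕ} (hj : j < n) {y : ℝ}
    (hy : y ∈ Icc (x j) (x (j + 1))) :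
    hatf x n j y = (x (j + 1) - y) / (x (j + 1) - x j) := by
  have hlt : x j < x (j + 1) := hx (mem_Iic.2 hj.le) (mem_Iic.2 hj) (Nat.lt_succ_self j)
  have hjn : j ≠ n := hj.ne
  unfold hatf
  rw [if_neg (not_lt.2 ((pl_le hx hj.le).trans hy.1))]
  rcases eq_or_lt_of_le hy.1 with rfl | hgt
  · rw [if_pos le_rfl, div_self (sub_ne_zero.2 hlt.ne')]
    split_ifs with hj0
    · rfl
    · have : x (j - 1) < x j := hx (mem_Iic.2 (by omega)) (mem_Iic.2 hj.le) (by omega)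
      rw [div_self (sub_ne_zero.2 this.ne')]
  · rw [if_neg (not_le.2 hgt), if_pos (by simpa [pr, hjn] using hy.2), if_neg hjn]

lemma hatf_succ_of_mem_Icc_left {j : ℕ} {y : ℝ} (hy : y ∈ Icc (x j) (x (j + 1))) :
    hatf x n (j + 1) y = (y - x j) / (x (j + 1) - x j) := by
  simp only [hatf, pl, Nat.add_one_ne_zero, if_false, Nat.add_sub_cancel, not_lt.2 hy.1, hy.2,
    if_true]

lemma hatf_eq_zero_of_mem_Icc (hx : StrictMonoOn x (Iic n)) {i j : ℕ} (hi : i < n) (hj : j ≤ n)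
    (hji : j ≠ i) (hji' : j ≠ i + 1) {y : ℝ} (hy : y ∈ Icc (x i) (x (i + 1))) :
    hatf x n j y = 0 := by
  have hmono := hx.monotoneOn
  unfold hatf
  rcases Nat.lt_or_gt_of_ne hji with hlt | hgt
  · have hj1 : x (j + 1) ≤ x i := hmono (mem_Iic.2 (by omega)) (mem_Iic.2 hi.le) hlt
    have hjlt : x j < x (j + 1) := hx (mem_Iic.2 hj) (mem_Iic.2 (by omega)) (Nat.lt_succ_self j)
    simp only [pr, if_neg (show j ≠ n by omega)]
    split_ifs <;> first
      | rfl | (exfalso; linarith [hy.1]) | exact div_eq_zero_iff.2 (Or.inl (by linarith [hy.1]))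
  · have hj0 : j ≠ 0 := by omega
    have hij : x (i + 1) ≤ x (j - 1) := hmono (mem_Iic.2 (by omega)) (mem_Iic.2 (by omega))
      (by omega)
    have hjlt : x (j - 1) < x j := hx (mem_Iic.2 (by omega)) (mem_Iic.2 hj) (by omega)
    simp only [pl, if_neg hj0]
    split_ifs <;> first
      | rfl | (exfalso; linarith [hy.2]) | exact div_eq_zero_iff.2 (Or.inl (by linarith [hy.2]))

end HatFunctions

section Reconstruction

variable {n : ℕ} {x : ℕ → ℝ} {P : ℕ → ℕ → Polynomial ℝ}

lemma sfun_eq_eval_of_le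
    (hPcont : ∀ j, 0 < j → j < n → (P j 0).eval (x j) = (P j 1).eval (x j))
    {i : ℕ} (hi : i < n) {y : ℝ} (hy : x i ≤ y) : sfun x n P i y = (P i 1).eval y := by
  unfold sfun
  split_ifs with h₀ hn hyi
  · rw [h₀]
  · omega
  · rw [le_antisymm hyi hy, hPcont i (Nat.pos_of_ne_zero h₀) hi]
  · rfl

lemma sfun_succ_eq_eval_of_le {i : ℕ} {y : ℝ} (hy : y ≤ x (i + 1)) :
    sfun x n P (i + 1) y = (P (i + 1) 0).eval y := by
  simp only [sfun, Nat.add_one_ne_zero, hy, if_false, if_true]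
  split_ifs with hn
  · rw [hn]
  · rfl

noncomputable def elementRecon (x : ℕ → ℝ) (P : ℕ → ℕ → Polynomial ℝ) (i : ℕ) (y : ℝ) : ℝ :=
  (x (i + 1) - y) / (x (i + 1) - x i) * (P i 1).eval y
    + (y - x i) / (x (i + 1) - x i) * (P (i + 1) 0).eval y

lemma contDiff_elementRecon (i : ℕ) : ContDiff ℝ 1 (elementRecon x P i) := by
  have hpoly (p : Polynomial ℝ) : ContDiff ℝ 1 (fun y => p.eval y) := by
    simpa using p.contDiff_aeval (R := ℝ) (𝕜 := ℝ) 1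
  have := hpoly (P i 1)
  have := hpoly (P (i + 1) 0)
  unfold elementRecon
  fun_prop

lemma sum_hatf_mul_sfun_eqOn (hx : StrictMonoOn x (Iic n))
    (hPcont : ∀ j, 0 < j → j < n → (P j 0).eval (x j) = (P j 1).eval (x j))
    {i : ℕ} (hi : i < n) :
    EqOn (fun y => ∑ j ∈ Finset.range (n + 1), hatf x n j y * sfun x n P j y)
      (elementRecon x P i) (Icc (x i) (x (i + 1))) := by
  intro y hy
  dsimp only
  have hsub : {i, i + 1} ⊆ Finset.range (n + 1) := by
    intro j hj
    simp only [Finset.mem_insert, Finset.mem_singleton] at hj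
    rw [Finset.mem_range]
    omega
  rw [← Finset.sum_subset hsub fun j hj hji => ?_, Finset.sum_pair (Nat.succ_ne_self i).symm,
    hatf_of_mem_Icc_right hx hi hy, hatf_succ_of_mem_Icc_left hy,
    sfun_eq_eval_of_le hPcont hi hy.1, sfun_succ_eq_eval_of_le hy.2, elementRecon]
  simp only [Finset.mem_insert, Finset.mem_singleton, not_or] at hji
  rw [hatf_eq_zero_of_mem_Icc hx hi (by simpa [Nat.lt_succ_iff] using hj) hji.1 hji.2 hy,
    zero_mul]

/-- On the first element `Dfun x n P 0` is the derivative of `ψ₀ s₀`, which equals `s₀` at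
`x 0` and vanishes at `x 1`. -/
lemma integral_Dfun_zero (hn : n ≠ 0) (h01 : x 0 < x 1) :
    ∫ t in x 0..x 1, Dfun x n P 0 t = -(P 0 1).eval (x 0) := by
  set g : ℝ → ℝ := fun t => (x 1 - t) / (x 1 - x 0) * (P 0 1).eval t
  set g' : ℝ → ℝ := fun t => -(1 / (x 1 - x 0)) * (P 0 1).eval t
    + (x 1 - t) / (x 1 - x 0) * (P 0 1).derivative.eval t
  have hg (t : ℝ) : HasDerivAt g (g' t) t := by
    refine ((((hasDerivAt_id' t).const_sub (x 1)).div_const (x 1 - x 0)).mul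
      ((P 0 1).hasDerivAt t)).congr_deriv ?_
    simp only [g']
    ring
  have hDfun : EqOn (Dfun x n P 0) g' (Ioc (x 0) (x 1)) := fun t ht => by
    simp [Dfun, not_le.2 ht.1, pr, Ne.symm hn, g']
  calc ∫ t in x 0..x 1, Dfun x n P 0 t = ∫ t in x 0..x 1, g' t :=
        integral_congr_ae (ae_of_all _ fun t ht => hDfun (by rwa [uIoc_of_le h01.le] at ht))
    _ = g (x 1) - g (x 0) :=
        integral_eq_sub_of_hasDerivAt (fun t _ => hg t) ((by fun_prop : Continuous g').intervalIntegrable _ _)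
    _ = -(P 0 1).eval (x 0) := by
        simp [g, div_self (sub_ne_zero.2 h01.ne')]

end Reconstruction

theorem reconstruction_inflow_bc_general (n k' : ℕ) (hn : 1 ≤ n) (x : ℕ → ℝ)
    (hx : ∀ i < n, x i < x (i + 1)) (β : ℝ) (hβ : 0 < β) (f uh : ℝ → ℝ)
    (P : ℕ → ℕ → Polynomial ℝ)
    (hPcont : ∀ j, 0 < j → j < n → (P j 0).eval (x j) = (P j 1).eval (x j))
    (hortho : ∀ j ≤ n, j ≠ n →
      (∫ t in pl x j..x j,
          (f t * hatf x n j t + β * (1 / (x j - pl x j)) * uh t))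
        + (∫ t in (x j)..(pr x n j),
            (f t * hatf x n j t + β * (-(1 / (pr x n j - x j))) * uh t)) = 0)
    (hlocal : ∀ j ≤ n, ∀ q₁ q₂ : Polynomial ℝ,
      q₁.degree ≤ (k' : WithBot ℕ) → q₂.degree ≤ (k' : WithBot ℕ) →
      (∫ t in pl x j..x j, β * Dfun x n P j t * q₁.eval t)
        + (∫ t in (x j)..(pr x n j), β * Dfun x n P j t * q₂.eval t)
      = (∫ t in pl x j..x j,
          (f t * hatf x n j t + β * (1 / (x j - pl x j)) * uh t) * q₁.eval t)
        + ∫ t in (x j)..(pr x n j),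
            (f t * hatf x n j t + β * (-(1 / (pr x n j - x j))) * uh t) * q₂.eval t) :
    (∃ dsh : ℝ → ℝ, IsH1 (x 0) (x n)
        (fun y => ∑ j ∈ Finset.range (n + 1), hatf x n j y * sfun x n P j y) dsh)
    ∧ (∑ j ∈ Finset.range (n + 1), hatf x n j (x 0) * sfun x n P j (x 0)) = 0 := by
  have hmesh : StrictMonoOn x (Iic n) := strictMonoOn_Iic_of_lt_succ hx
  have h01 : x 0 < x 1 := hx 0 hn
  have hS i (hi : i < n) := sum_hatf_mul_sfun_eqOn hmesh hPcont hi
  -- The local problem at the inflow vertex tested with `v_h = 1`; its right-hand side is `hortho 0`.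
  have hinflow : (P 0 1).eval (x 0) = 0 := by
    have hdeg : (1 : Polynomial ℝ).degree ≤ (k' : WithBot ℕ) :=
      Polynomial.degree_one_le.trans (WithBot.coe_le_coe.2 (Nat.zero_le k'))
    have h := hlocal 0 (Nat.zero_le n) 1 1 hdeg hdeg
    simp only [Polynomial.eval_one, mul_one] at h
    rw [hortho 0 (Nat.zero_le n) (by omega), pl, if_pos rfl, integral_same, zero_add, pr,
      if_neg (by omega), intervalIntegral.integral_const_mul,
      integral_Dfun_zero (by omega) h01] at h
    simpa [hβ.ne'] using h
  refine ⟨⟨_, isH1_of_eqOn_Icc hmesh (fun i => contDiff_elementRecon i) hS⟩, ?_⟩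
  simpa [elementRecon, hinflow] using hS 0 hn ⟨le_rfl, h01.le⟩

/-- the global reconstruction `s_h = ∑_j ψ_j s_j` built from the
patchwise problems (with hat-orthogonality at the interior and inflow
vertices) lies in `H¹(Ω)` and vanishes at the inflow endpoint `a = x 0`
(case `β > 0`). -/
theorem reconstruction_inflow_bc (n k' : ℕ) (hn : 1 ≤ n) (x : ℕ → ℝ)
    (hx : ∀ i < n, x i < x (i + 1)) (β : ℝ) (hβ : 0 < β) (f uh : ℝ → ℝ)
    (hf : MemLp f 2 (volume.restrict (Ioo (x 0) (x n))))
    (hfint : ∀ i < n, IntervalIntegrable f volume (x i) (x (i + 1)))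
    (huh : MemLp uh 2 (volume.restrict (Ioo (x 0) (x n))))
    (huhint : ∀ i < n, IntervalIntegrable uh volume (x i) (x (i + 1)))
    (P : ℕ → ℕ → Polynomial ℝ)
    (hPdeg : ∀ j i, (P j i).degree ≤ (k' : WithBot ℕ))
    (hPcont : ∀ j, 0 < j → j < n → (P j 0).eval (x j) = (P j 1).eval (x j))
    (hortho : ∀ j ≤ n, j ≠ n →
      (∫ t in pl x j..x j,
          (f t * hatf x n j t + β * (1 / (x j - pl x j)) * uh t))
        + (∫ t in (x j)..(pr x n j),
            (f t * hatf x n j t + β * (-(1 / (pr x n j - x j))) * uh t)) = 0)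
    (hlocal : ∀ j ≤ n, ∀ q₁ q₂ : Polynomial ℝ,
      q₁.degree ≤ (k' : WithBot ℕ) → q₂.degree ≤ (k' : WithBot ℕ) →
      (∫ t in pl x j..x j, β * Dfun x n P j t * q₁.eval t)
        + (∫ t in (x j)..(pr x n j), β * Dfun x n P j t * q₂.eval t)
      = (∫ t in pl x j..x j,
          (f t * hatf x n j t + β * (1 / (x j - pl x j)) * uh t) * q₁.eval t)
        + ∫ t in (x j)..(pr x n j),
            (f t * hatf x n j t + β * (-(1 / (pr x n j - x j))) * uh t) * q₂.eval t) :
    (∃ dsh : ℝ → ℝ, IsH1 (x 0) (x n)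
        (fun y => ∑ j ∈ Finset.range (n + 1), hatf x n j y * sfun x n P j y) dsh)
    ∧ (∑ j ∈ Finset.range (n + 1), hatf x n j (x 0) * sfun x n P j (x 0)) = 0 :=
  reconstruction_inflow_bc_general n k' hn x hx β hβ f uh P hPcont hortho hlocal
end

section
/- (Elementwise orthogonality of the reconstruction residual) In the setting of the patchwise reconstruction with s_h = ∑_j ψ_j s_j on the mesh of Ω = (a,b), for every mesh element K and every polynomial v of degree ≤ k' on K, ∫_K (f - β s_h') v = 0. Consequently β s_h' = Π_{k'} f, the L²-orthogonal projection of f onto piecewise polynomials of degree k' on the mesh. -/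
/-!
On an element `K = (x i, x (i+1))` only the hat functions `ψ_i` and `ψ_{i+1}` are nonzero, so
`s_h' = (ψ_i s_i)' + (ψ_{i+1} s_{i+1})'` there. Test the local problem of patch `i` with `q` on `K`
and `0` on its other element, do the same for patch `i+1`, and add: the right-hand sides combine to
`∫_K (f (ψ_i + ψ_{i+1}) + β (ψ_i' + ψ_{i+1}') u_h) q = ∫_K f q`, since the hat functions form a
partition of unity on `K` and their constant derivatives cancel. On `K` each `ψ_j s_j` is a
polynomial of degree `≤ k' + 1`, so `β s_h'` is a polynomial of degree `≤ k'` there.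
-/

open MeasureTheory Set intervalIntegral

open Polynomial

theorem integral_residual_eq_zero_of_partition_of_unity {a b β c₀ c₁ : ℝ}
    {f u g ψ₀ ψ₁ D₀ D₁ : ℝ → ℝ}
    (hf : IntervalIntegrable f volume a b) (hu : IntervalIntegrable u volume a b)
    (hD₀ : IntervalIntegrable D₀ volume a b) (hD₁ : IntervalIntegrable D₁ volume a b)
    (hg : ContinuousOn g (uIcc a b))
    (hψ₀ : ContinuousOn ψ₀ (uIcc a b)) (hψ₁ : ContinuousOn ψ₁ (uIcc a b))
    (hψ : ∀ t ∈ uIcc a b, ψ₀ t + ψ₁ t = 1) (hc : c₀ + c₁ = 0)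
    (h₀ : ∫ t in a..b, β * D₀ t * g t = ∫ t in a..b, (f t * ψ₀ t + β * c₀ * u t) * g t)
    (h₁ : ∫ t in a..b, β * D₁ t * g t = ∫ t in a..b, (f t * ψ₁ t + β * c₁ * u t) * g t) :
    ∫ t in a..b, (f t - β * (D₀ t + D₁ t)) * g t = 0 := by
  have hDg₀ := (hD₀.const_mul β).mul_continuousOn hg
  have hDg₁ := (hD₁.const_mul β).mul_continuousOn hg
  have hr₀ := ((hf.mul_continuousOn hψ₀).add (hu.const_mul (β * c₀))).mul_continuousOn hg
  have hr₁ := ((hf.mul_continuousOn hψ₁).add (hu.const_mul (β * c₁))).mul_continuousOn hg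
  calc ∫ t in a..b, (f t - β * (D₀ t + D₁ t)) * g t
      = (∫ t in a..b, f t * g t)
          - ((∫ t in a..b, β * D₀ t * g t) + ∫ t in a..b, β * D₁ t * g t) := by
        rw [← integral_add hDg₀ hDg₁, ← integral_sub (hf.mul_continuousOn hg) (hDg₀.add hDg₁)]
        congr 1 with t
        ring
    _ = (∫ t in a..b, f t * g t) - ∫ t in a..b,
          ((f t * ψ₀ t + β * c₀ * u t) * g t + (f t * ψ₁ t + β * c₁ * u t) * g t) := by
        rw [h₀, h₁, integral_add hr₀ hr₁]
    _ = 0 := by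
        rw [sub_eq_zero]
        refine integral_congr fun t ht => ?_
        linear_combination (f t * g t) * (hψ t ht).symm + β * u t * g t * hc.symm

theorem degree_derivative_mul_le {R : Type*} [Semiring R] {ℓ p : R[X]} {k : ℕ}
    (hℓ : ℓ.degree ≤ 1) (hp : p.degree ≤ k) : (derivative (ℓ * p)).degree ≤ k := by
  rw [← natDegree_le_iff_degree_le] at hp ⊢
  have hℓ' : ℓ.natDegree ≤ 1 := natDegree_le_of_degree_le hℓ
  have := natDegree_mul_le_of_le hℓ' hp
  have := natDegree_derivative_le (ℓ * p)
  omega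

theorem intervalIntegrable_of_eqOn_Ioo_eval {a b : ℝ} {f : ℝ → ℝ} {p : ℝ[X]} (hab : a ≤ b)
    (h : EqOn f (fun t => p.eval t) (Ioo a b)) : IntervalIntegrable f volume a b :=
  (p.continuous.intervalIntegrable a b).congr_uIoo (uIoo_of_le hab ▸ h.symm)

section Mesh

variable {x : ℕ → ℝ} {n i : ℕ} {t : ℝ}

theorem pl_le_s14 (hx : ∀ i < n, x i < x (i + 1)) (hi : i ≤ n) : pl x i ≤ x i := by
  rcases i with _ | i
  · simp [pl]
  · simpa [pl] using (hx i hi).le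

theorem hatf_of_mem_Ioo (hx : ∀ i < n, x i < x (i + 1)) (hi : i < n)
    (ht : t ∈ Ioo (x i) (x (i + 1))) :
    hatf x n i t = (x (i + 1) - t) / (x (i + 1) - x i) := by
  have hpr : pr x n i = x (i + 1) := by simp [pr, hi.ne]
  rw [hatf, if_neg (not_lt.2 ((pl_le_s14 hx hi.le).trans ht.1.le)), if_neg (not_le.2 ht.1),
    if_pos (hpr ▸ ht.2.le), if_neg hi.ne]

theorem hatf_succ_of_mem_Ioo (ht : t ∈ Ioo (x i) (x (i + 1))) :
    hatf x n (i + 1) t = (t - x i) / (x (i + 1) - x i) := by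
  simp [hatf, pl, not_lt.2 ht.1.le, ht.2.le]

theorem Dfun_of_mem_Ioo {P : ℕ → ℕ → ℝ[X]} (hi : i < n) (ht : t ∈ Ioo (x i) (x (i + 1))) :
    Dfun x n P i t = (derivative
      (C (x (i + 1) - x i)⁻¹ * (C (x (i + 1)) - X) * P i 1)).eval t := by
  have hpr : pr x n i = x (i + 1) := by simp [pr, hi.ne]
  simp only [Dfun, if_neg (not_le.2 ht.1), hpr, derivative_mul, derivative_C, derivative_sub,
    derivative_X, eval_add, eval_mul, eval_sub, eval_C, eval_X, eval_zero, eval_one]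
  ring

theorem Dfun_succ_of_mem_Ioo {P : ℕ → ℕ → ℝ[X]} (ht : t ∈ Ioo (x i) (x (i + 1))) :
    Dfun x n P (i + 1) t = (derivative
      (C (x (i + 1) - x i)⁻¹ * (X - C (x i)) * P (i + 1) 0)).eval t := by
  simp only [Dfun, if_pos ht.2.le, pl, Nat.add_one_ne_zero, if_false, Nat.add_sub_cancel,
    derivative_mul, derivative_C, derivative_sub, derivative_X, eval_add, eval_mul, eval_sub,
    eval_C, eval_X, eval_zero, eval_one]
  ring

end Mesh

theorem reconstruction_elementwise_orthogonality_general (n k' : ℕ)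
    (x : ℕ → ℝ) (hx : ∀ i < n, x i < x (i + 1)) (β : ℝ)
    (f uh : ℝ → ℝ)
    (hfint : ∀ i < n, IntervalIntegrable f volume (x i) (x (i + 1)))
    (huhint : ∀ i < n, IntervalIntegrable uh volume (x i) (x (i + 1)))
    (P : ℕ → ℕ → Polynomial ℝ)
    (hPdeg : ∀ j i, (P j i).degree ≤ (k' : WithBot ℕ))
    (hlocal : ∀ j ≤ n, ∀ q₁ q₂ : Polynomial ℝ,
      q₁.degree ≤ (k' : WithBot ℕ) → q₂.degree ≤ (k' : WithBot ℕ) →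
      (∫ t in pl x j..x j, β * Dfun x n P j t * q₁.eval t)
        + (∫ t in (x j)..(pr x n j), β * Dfun x n P j t * q₂.eval t)
      = (∫ t in pl x j..x j,
          (f t * hatf x n j t + β * (1 / (x j - pl x j)) * uh t) * q₁.eval t)
        + ∫ t in (x j)..(pr x n j),
            (f t * hatf x n j t + β * (-(1 / (pr x n j - x j))) * uh t) * q₂.eval t) :
    ∀ i < n,
      (∀ q : Polynomial ℝ, q.degree ≤ (k' : WithBot ℕ) →
        (∫ t in (x i)..(x (i + 1)),
          (f t - β * (Dfun x n P i t + Dfun x n P (i + 1) t)) * q.eval t) = 0)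
      ∧ ∃ rpol : Polynomial ℝ, rpol.degree ≤ (k' : WithBot ℕ) ∧
          ∀ t ∈ Ioo (x i) (x (i + 1)),
            β * (Dfun x n P i t + Dfun x n P (i + 1) t) = rpol.eval t := by
  intro i hi
  have hab := hx i hi
  have hpr : pr x n i = x (i + 1) := by simp [pr, hi.ne]
  have hpl : pl x (i + 1) = x i := by simp [pl]
  refine ⟨fun q hq => ?_, ?_⟩
  · have h₀ := hlocal i hi.le 0 q (by simp) hq
    have h₁ := hlocal (i + 1) hi q 0 hq (by simp)
    simp only [eval_zero, mul_zero, intervalIntegral.integral_zero, zero_add, add_zero, hpr, hpl]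
      at h₀ h₁
    refine integral_residual_eq_zero_of_partition_of_unity
      (ψ₀ := fun t => (x (i + 1) - t) / (x (i + 1) - x i))
      (ψ₁ := fun t => (t - x i) / (x (i + 1) - x i)) (c₁ := 1 / (x (i + 1) - x i))
      (hfint i hi) (huhint i hi)
      (intervalIntegrable_of_eqOn_Ioo_eval hab.le fun t ht => Dfun_of_mem_Ioo hi ht)
      (intervalIntegrable_of_eqOn_Ioo_eval hab.le fun t ht => Dfun_succ_of_mem_Ioo ht)
      q.continuous.continuousOn (by fun_prop) (by fun_prop)
      (fun t _ => by field_simp [sub_ne_zero.2 hab.ne']; ring) (neg_add_cancel _) ?_ ?_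
    · exact h₀.trans (integral_congr_Ioo_of_le hab.le fun t ht => by
        simp only [hatf_of_mem_Ioo hx hi ht])
    · exact h₁.trans (integral_congr_Ioo_of_le hab.le fun t ht => by
        simp only [hatf_succ_of_mem_Ioo ht])
  · refine ⟨β • (derivative (C (x (i + 1) - x i)⁻¹ * (C (x (i + 1)) - X) * P i 1)
        + derivative (C (x (i + 1) - x i)⁻¹ * (X - C (x i)) * P (i + 1) 0)), ?_, ?_⟩
    · exact (degree_smul_le _ _).trans <| (degree_add_le _ _).trans <| max_le
        (degree_derivative_mul_le (by compute_degree) (hPdeg i 1))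
        (degree_derivative_mul_le (by compute_degree) (hPdeg (i + 1) 0))
    · intro t ht
      rw [Dfun_of_mem_Ioo hi ht, Dfun_succ_of_mem_Ioo ht, eval_smul, eval_add, smul_eq_mul]

/-- elementwise orthogonality of the reconstruction residual:
for every mesh element `K = (x i, x (i+1))` and every polynomial `q` of degree
`≤ k'`, `∫_K (f - β s_h') q = 0`; moreover `β s_h'` is a polynomial of degree
`≤ k'` on each element, so that `β s_h'` is the `L²`-orthogonal projection
`Π_{k'} f` of `f`. Here `s_h' = Dfun i + Dfun (i+1)` on element `i`. -/
theorem reconstruction_elementwise_orthogonality (n k' : ℕ) (hn : 1 ≤ n)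
    (x : ℕ → ℝ) (hx : ∀ i < n, x i < x (i + 1)) (β : ℝ) (hβ : 0 < β)
    (f uh : ℝ → ℝ)
    (hf : MemLp f 2 (volume.restrict (Ioo (x 0) (x n))))
    (hfint : ∀ i < n, IntervalIntegrable f volume (x i) (x (i + 1)))
    (huh : MemLp uh 2 (volume.restrict (Ioo (x 0) (x n))))
    (huhint : ∀ i < n, IntervalIntegrable uh volume (x i) (x (i + 1)))
    (P : ℕ → ℕ → Polynomial ℝ)
    (hPdeg : ∀ j i, (P j i).degree ≤ (k' : WithBot ℕ))
    (hPcont : ∀ j, 0 < j → j < n → (P j 0).eval (x j) = (P j 1).eval (x j))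
    (hortho : ∀ j ≤ n, j ≠ n →
      (∫ t in pl x j..x j,
          (f t * hatf x n j t + β * (1 / (x j - pl x j)) * uh t))
        + (∫ t in (x j)..(pr x n j),
            (f t * hatf x n j t + β * (-(1 / (pr x n j - x j))) * uh t)) = 0)
    (hlocal : ∀ j ≤ n, ∀ q₁ q₂ : Polynomial ℝ,
      q₁.degree ≤ (k' : WithBot ℕ) → q₂.degree ≤ (k' : WithBot ℕ) →
      (∫ t in pl x j..x j, β * Dfun x n P j t * q₁.eval t)
        + (∫ t in (x j)..(pr x n j), β * Dfun x n P j t * q₂.eval t)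
      = (∫ t in pl x j..x j,
          (f t * hatf x n j t + β * (1 / (x j - pl x j)) * uh t) * q₁.eval t)
        + ∫ t in (x j)..(pr x n j),
            (f t * hatf x n j t + β * (-(1 / (pr x n j - x j))) * uh t) * q₂.eval t) :
    ∀ i < n,
      (∀ q : Polynomial ℝ, q.degree ≤ (k' : WithBot ℕ) →
        (∫ t in (x i)..(x (i + 1)),
          (f t - β * (Dfun x n P i t + Dfun x n P (i + 1) t)) * q.eval t) = 0)
      ∧ ∃ rpol : Polynomial ℝ, rpol.degree ≤ (k' : WithBot ℕ) ∧
          ∀ t ∈ Ioo (x i) (x (i + 1)),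
            β * (Dfun x n P i t + Dfun x n P (i + 1) t) = rpol.eval t :=
  reconstruction_elementwise_orthogonality_general n k' x hx β f uh hfint huhint P hPdeg hlocal
end
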